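/- Let H ≥ 1 and define α_t = (H+1)/(H+t), α_t^i = α_i ∏_{j=i+1}^t (1-α_j) for 1 ≤ i ≤ t. Then for every t ≥ 1, max_{i∈[t]} α_t^i ≤ 2H/t and ∑_{i=1}^t (α_t^i)^2 ≤ 2H/t. -/

import Mathlib

/-!
The weights `α_t^1, …, α_t^t` form a probability vector, and each of them is at most `α_t`:
the bound `α_t^i ≤ α_t` propagates from `t` to `t + 1` because `α_t (1 - α_{t+1}) ≤ α_{t+1}`.
Since `α_t ≤ 2H/t`, this gives the first claim, and `∑ (α_t^i)^2 ≤ (max_i α_t^i) ∑ α_t^i` gives the second.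
-/

noncomputable def lrate (H t : ℕ) : ℝ := (H + 1) / (H + t)

noncomputable def lweight (H i t : ℕ) : ℝ :=
  lrate H i * ∏ j ∈ Finset.Icc (i + 1) t, (1 - lrate H j)

open Finset

theorem Finset.sum_sq_le_mul_sum {ι R : Type*} [CommSemiring R] [PartialOrder R]
    [IsOrderedRing R] {s : Finset ι} {w : ι → R} {M : R}
    (hw : ∀ i ∈ s, 0 ≤ w i) (hM : ∀ i ∈ s, w i ≤ M) :
    ∑ i ∈ s, w i ^ 2 ≤ M * ∑ i ∈ s, w i := by
  rw [mul_sum]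
  refine sum_le_sum fun i hi => ?_
  rw [sq]
  exact mul_le_mul_of_nonneg_right (hM i hi) (hw i hi)

lemma lrate_nonneg (H t : ℕ) : 0 ≤ lrate H t := by
  unfold lrate
  positivity

lemma lrate_le_one (H : ℕ) {t : ℕ} (ht : 1 ≤ t) : lrate H t ≤ 1 := by
  have ht' : (1 : ℝ) ≤ t := by exact_mod_cast ht
  exact div_le_one_of_le₀ (by linarith) (by positivity)

lemma one_sub_lrate_succ (H t : ℕ) : 1 - lrate H (t + 1) = t / (H + t + 1) := by
  unfold lrate
  field_simp
  push_cast
  ring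

lemma lrate_mul_one_sub_lrate_succ_le (H t : ℕ) :
    lrate H t * (1 - lrate H (t + 1)) ≤ lrate H (t + 1) := by
  have hrate : lrate H (t + 1) = (H + 1) / (H + t + 1) := by
    unfold lrate
    push_cast
    ring
  have hfrac : (t : ℝ) / (H + t) ≤ 1 := div_le_one_of_le₀ (by simp) (by positivity)
  calc lrate H t * (1 - lrate H (t + 1))
      = (H + 1) / (H + t + 1) * (t / (H + t)) := by
        rw [one_sub_lrate_succ, lrate]
        ring
    _ ≤ (H + 1) / (H + t + 1) * 1 := by gcongr
    _ = lrate H (t + 1) := by rw [mul_one, hrate]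

lemma lweight_self (H t : ℕ) : lweight H t t = lrate H t := by
  rw [lweight, Icc_eq_empty (by omega), prod_empty, mul_one]

lemma lweight_succ (H : ℕ) {i t : ℕ} (hi : i ≤ t) :
    lweight H i (t + 1) = lweight H i t * (1 - lrate H (t + 1)) := by
  rw [lweight, lweight, prod_Icc_succ_top (by omega), mul_assoc]

lemma lweight_nonneg (H i t : ℕ) : 0 ≤ lweight H i t := by
  refine mul_nonneg (lrate_nonneg H i) (prod_nonneg fun j hj => ?_)
  have hj : 1 ≤ j := by linarith [(mem_Icc.mp hj).1]
  linarith [lrate_le_one H hj]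

lemma lweight_le_lrate (H : ℕ) {i t : ℕ} (hi : i ≤ t) : lweight H i t ≤ lrate H t := by
  induction t, hi using Nat.le_induction with
  | base => rw [lweight_self]
  | succ t hit ih =>
    rw [lweight_succ H hit]
    calc lweight H i t * (1 - lrate H (t + 1))
        ≤ lrate H t * (1 - lrate H (t + 1)) :=
          mul_le_mul_of_nonneg_right ih (by linarith [lrate_le_one H (Nat.le_add_left 1 t)])
      _ ≤ lrate H (t + 1) := lrate_mul_one_sub_lrate_succ_le H t

lemma sum_lweight (H : ℕ) {t : ℕ} (ht : 1 ≤ t) : ∑ i ∈ Icc 1 t, lweight H i t = 1 := by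
  induction t, ht using Nat.le_induction with
  | base =>
    rw [Icc_self, sum_singleton, lweight_self, lrate, Nat.cast_one]
    exact div_self (by positivity)
  | succ t ht ih =>
    rw [sum_Icc_succ_top (by omega), lweight_self,
      sum_congr rfl fun i hi => lweight_succ H (mem_Icc.mp hi).2, ← sum_mul, ih]
    ring

lemma lrate_le_two_mul_div {H t : ℕ} (hH : 1 ≤ H) (ht : 1 ≤ t) : lrate H t ≤ 2 * H / t := by
  have hH' : (1 : ℝ) ≤ H := by exact_mod_cast hH
  have ht' : (1 : ℝ) ≤ t := by exact_mod_cast ht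
  rw [lrate, div_le_div_iff₀ (by linarith) (by linarith)]
  nlinarith

theorem stmt1 (H : ℕ) (hH : 1 ≤ H) (t : ℕ) (ht : 1 ≤ t) :
    (∀ i ∈ Finset.Icc 1 t, lweight H i t ≤ 2 * H / t) ∧
    ∑ i ∈ Finset.Icc 1 t, (lweight H i t) ^ 2 ≤ 2 * H / t := by
  have hmax : ∀ i ∈ Icc 1 t, lweight H i t ≤ lrate H t :=
    fun i hi => lweight_le_lrate H (mem_Icc.mp hi).2
  have hbound := lrate_le_two_mul_div hH ht
  refine ⟨fun i hi => (hmax i hi).trans hbound, ?_⟩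
  calc ∑ i ∈ Icc 1 t, lweight H i t ^ 2
      ≤ lrate H t * ∑ i ∈ Icc 1 t, lweight H i t :=
        sum_sq_le_mul_sum (fun i _ => lweight_nonneg H i t) hmax
    _ = lrate H t := by rw [sum_lweight H ht, mul_one]
    _ ≤ 2 * H / t := hbound
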